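/- Let g : K_∞ → K_∞ be continuous and define its stage-n restriction r_n(g) = π_n ∘ g ∘ f_{n,∞} ∈ [K_n → K_n]. Then f_n^-(r_{n+1}(g)) = r_n(g) for all n, where f_n^- on function spaces conjugates by the projection pair; hence the family (r_n(g)) assembles into a coherent thread of the inverse limit of function spaces. -/
import Mathlib


universe u

/-- The iterated function-space tower: KT A 0 = A and KT A (n+1) = KT A n → KT A n. -/
def KT (A : Type u) : Nat → Type u
  | 0 => A
  | n + 1 => KT A n → KT A n

/-- The pointwise partial order on each stage of the tower. -/
instance KTorder (A : Type u) [PartialOrder A] : ∀ n, PartialOrder (KT A n)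
  | 0 => inferInstanceAs (PartialOrder A)
  | n + 1 =>
      letI := KTorder A n
      inferInstanceAs (PartialOrder (KT A n → KT A n))

/-- The projection pairs on the function-space tower, generated from a base
pair by conjugation: up (n+1) F = up n ∘ F ∘ down n and
down (n+1) F = down n ∘ F ∘ up n. -/
def ud (A : Type u) (u0 : A → (A → A)) (d0 : (A → A) → A) :
    ∀ n, (KT A n → KT A (n + 1)) × (KT A (n + 1) → KT A n)
  | 0 => (u0, d0)
  | n + 1 =>
      (fun F => (ud A u0 d0 n).1 ∘ F ∘ (ud A u0 d0 n).2,
       fun F => (ud A u0 d0 n).2 ∘ F ∘ (ud A u0 d0 n).1)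

/-- The inverse limit of the function-space tower: coherent threads. -/
def KTinf (A : Type u) (u0 : A → (A → A)) (d0 : (A → A) → A) : Type u :=
  {x : ∀ n, KT A n // ∀ n, (ud A u0 d0 n).2 (x (n + 1)) = x n}

instance (A : Type u) [PartialOrder A] (u0 : A → (A → A)) (d0 : (A → A) → A) :
    PartialOrder (KTinf A u0 d0) :=
  inferInstanceAs (PartialOrder {x : ∀ n, KT A n // ∀ n, (ud A u0 d0 n).2 (x (n + 1)) = x n})

/-- Coherence of stage restrictions: for a continuous endomap g of the inverse
limit, the stage restrictions r n g = π n ∘ g ∘ f (n,∞) satisfy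
down (r (n+1) g) = r n g, where down on function spaces conjugates by the
projection pair; hence the family (r n g) assembles into a coherent thread of
the inverse limit of function spaces. -/
theorem stage_restriction_coherent (A : Type u) [PartialOrder A]
    (u0 : A → (A → A)) (d0 : (A → A) → A)
    (e : ∀ n, KT A n → KTinf A u0 d0)
    (hcompat : ∀ n (a : KT A n), e (n + 1) ((ud A u0 d0 n).1 a) = e n a)
    (g : KTinf A u0 d0 → KTinf A u0 d0)
    (hg : ∀ (S : Set (KTinf A u0 d0)) (v : KTinf A u0 d0),
      DirectedOn (· ≤ ·) S → IsLUB S v → IsLUB (g '' S) (g v))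
    (n : Nat) :
    (ud A u0 d0 (n + 1)).2 (fun b : KT A (n + 1) => (g (e (n + 1) b)).1 (n + 1)) =
      (fun a : KT A n => (g (e n a)).1 n) := by
  funext a
  show (ud A u0 d0 n).2 ((g (e (n + 1) ((ud A u0 d0 n).1 a))).1 (n + 1)) = _
  rw [hcompat]
  exact (g (e n a)).2 n
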